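/- arXiv:1802.03974 — 3 statements merged into one kernel-verified Lean document; each statement's English description precedes it below -/
import Mathlib

section
/- Let μ be a Borel probability measure on ℝ with ∫_ℝ |x|⁶ μ(dx) < ∞. Let α ≥ 0 and σ ∈ ℝ be constants such that m := −(6σ² − 4 + 4α) > 0, and define g(x) := ∫_ℝ (x − α y) μ(dy). Then ∫_ℝ (6σ² − 4) g(x)⁶ μ(dx) + 4α · ( ∫_ℝ g(z)³ μ(dz) )² ≤ m − m ∫_ℝ g(x)⁴ μ(dx). -/
open MeasureTheory

/-- Integrated Lyapunov condition for the nonlinearly measure-dependent example: with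
`g(x) = ∫ (x − α y) μ(dy)` and `m = −(6σ² − 4 + 4α) > 0`, one has
`∫ (6σ² − 4) g⁶ dμ + 4α (∫ g³ dμ)² ≤ m − m ∫ g⁴ dμ`. -/
theorem integrated_lyapunov_nonlinear_example
    (μ : Measure ℝ) [IsProbabilityMeasure μ]
    (hμ6 : Integrable (fun x => |x| ^ 6) μ)
    (α σ : ℝ) (hα : 0 ≤ α)
    (m : ℝ) (hm : m = -(6 * σ ^ 2 - 4 + 4 * α)) (hmpos : 0 < m)
    (g : ℝ → ℝ) (hg : ∀ x, g x = ∫ y, (x - α * y) ∂μ) :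
    (∫ x, (6 * σ ^ 2 - 4) * g x ^ 6 ∂μ) + 4 * α * (∫ z, g z ^ 3 ∂μ) ^ 2
      ≤ m - m * ∫ x, g x ^ 4 ∂μ := by
  -- identify g as affine
  have hid : Integrable (fun x : ℝ => x) μ := by
    refine (hμ6.add (integrable_const 1)).mono' measurable_id.aestronglyMeasurable ?_
    filter_upwards with x
    rw [Real.norm_eq_abs]
    simp only [Pi.add_apply]
    rcases le_or_gt (|x|) 1 with h | h
    · nlinarith [abs_nonneg x, pow_nonneg (abs_nonneg x) 6]
    · have h2 := pow_le_pow_right₀ h.le (show 1 ≤ 6 by norm_num)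
      rw [pow_one] at h2
      linarith
  set c : ℝ := α * ∫ y, y ∂μ with hc
  have hgE : ∀ x, g x = x - c := by
    intro x
    rw [hg x]
    rw [integral_sub (integrable_const x) (hid.const_mul α), integral_const,
      integral_const_mul]
    simp [hc]
  -- integrability of powers of g
  have habs6 : ∀ x : ℝ, |x - c| ^ 6 ≤ 32 * |x| ^ 6 + 32 * |c| ^ 6 := by
    intro x
    have h1 : |x - c| ≤ |x| + |c| := abs_sub x c
    have h2 : |x - c| ^ 6 ≤ (|x| + |c|) ^ 6 :=
      pow_le_pow_left₀ (abs_nonneg _) h1 6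
    have h3 := add_pow_le (abs_nonneg x) (abs_nonneg c) 6
    norm_num at h3
    linarith
  have hInt6' : Integrable (fun x : ℝ => 32 * |x| ^ 6 + 32 * |c| ^ 6) μ :=
    (hμ6.const_mul 32).add (integrable_const _)
  have h6 : Integrable (fun x => g x ^ 6) μ := by
    refine hInt6'.mono' ?_ ?_
    · have : Continuous fun x : ℝ => (x - c) ^ 6 :=
        (continuous_id.sub continuous_const).pow 6
      simp only [hgE]
      exact this.aestronglyMeasurable
    · filter_upwards with x
      rw [hgE, Real.norm_eq_abs, abs_pow]
      exact habs6 x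
  have hle46 : ∀ x : ℝ, |g x ^ 4| ≤ 1 + g x ^ 6 := by
    intro x
    rw [abs_pow]
    have h := sq_nonneg (|g x| ^ 3 - |g x|)
    have h2 := sq_nonneg (|g x| ^ 2 - 1)
    have := abs_nonneg (g x)
    have h6' : g x ^ 6 = |g x| ^ 6 := by
      rw [← abs_pow, abs_of_nonneg (by positivity)]
    rw [h6']
    nlinarith [sq_nonneg (|g x|)]
  have hle36 : ∀ x : ℝ, |g x ^ 3| ≤ 1 + g x ^ 6 := by
    intro x
    have h6' : g x ^ 6 = |g x ^ 3| ^ 2 := by rw [sq_abs]; ring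
    rw [h6']
    nlinarith [abs_nonneg (g x ^ 3), sq_nonneg (|g x ^ 3| - 1)]
  have hmeas : ∀ n : ℕ, AEStronglyMeasurable (fun x => g x ^ n) μ := by
    intro n
    have : Continuous fun x : ℝ => (x - c) ^ n :=
      (continuous_id.sub continuous_const).pow n
    simp only [hgE]
    exact this.aestronglyMeasurable
  have h4 : Integrable (fun x => g x ^ 4) μ := by
    refine ((integrable_const (1:ℝ)).add h6).mono' (hmeas 4) ?_
    filter_upwards with x
    simpa using hle46 x
  have h3 : Integrable (fun x => g x ^ 3) μ := by
    refine ((integrable_const (1:ℝ)).add h6).mono' (hmeas 3) ?_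
    filter_upwards with x
    simpa using hle36 x
  -- Cauchy–Schwarz via variance
  set a : ℝ := ∫ z, g z ^ 3 ∂μ with ha
  have hCS : a ^ 2 ≤ ∫ x, g x ^ 6 ∂μ := by
    have hvar : 0 ≤ ∫ x, (g x ^ 3 - a) ^ 2 ∂μ :=
      integral_nonneg fun x => sq_nonneg _
    have hexp : ∫ x, (g x ^ 3 - a) ^ 2 ∂μ
        = (∫ x, g x ^ 6 ∂μ) - 2 * a * a + a ^ 2 := by
      have : (fun x => (g x ^ 3 - a) ^ 2)
          = fun x => g x ^ 6 - (2 * a) * g x ^ 3 + a ^ 2 := by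
        funext x; ring
      have hI1 : Integrable (fun x => g x ^ 6 - 2 * a * g x ^ 3) μ :=
        h6.sub (h3.const_mul (2 * a))
      rw [this, integral_add hI1 (integrable_const _),
        integral_sub h6 (h3.const_mul (2 * a)), integral_const_mul, integral_const]
      simp [ha]
    nlinarith
  -- pointwise: -m * g^6 ≤ m * (1 - g^4)
  have hmono : ∫ x, -m * g x ^ 6 ∂μ ≤ ∫ x, m * (1 - g x ^ 4) ∂μ := by
    have hI : Integrable (fun x => m * (1 - g x ^ 4)) μ :=
      ((integrable_const (1 : ℝ)).sub h4).const_mul m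
    refine integral_mono (h6.const_mul (-m)) hI ?_
    intro x
    have hb : g x ^ 4 ≤ 1 + g x ^ 6 := le_trans (le_abs_self _) (hle46 x)
    show -m * g x ^ 6 ≤ m * (1 - g x ^ 4)
    nlinarith [hmpos.le, pow_nonneg (sq_nonneg (g x)) 3]
  have hre : (∫ x, m * (1 - g x ^ 4) ∂μ) = m - m * ∫ x, g x ^ 4 ∂μ := by
    rw [integral_const_mul, integral_sub (integrable_const 1) h4, integral_const]
    simp; ring
  have hl : (∫ x, (6 * σ ^ 2 - 4) * g x ^ 6 ∂μ) + 4 * α * a ^ 2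
      ≤ ∫ x, -m * g x ^ 6 ∂μ := by
    rw [integral_const_mul, integral_const_mul]
    have h6nn : 0 ≤ ∫ x, g x ^ 6 ∂μ :=
      integral_nonneg fun x => pow_nonneg (sq_nonneg (g x)) 3 |>.trans_eq (by ring)
    nlinarith [mul_le_mul_of_nonneg_left hCS (by positivity : (0:ℝ) ≤ 4 * α)]
  calc (∫ x, (6 * σ ^ 2 - 4) * g x ^ 6 ∂μ) + 4 * α * a ^ 2
      ≤ ∫ x, -m * g x ^ 6 ∂μ := hl
    _ ≤ ∫ x, m * (1 - g x ^ 4) ∂μ := hmono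
    _ = m - m * ∫ x, g x ^ 4 ∂μ := hre
end

section
/- Let κ > 0, θ > 0 and σ ∈ ℝ be constants with κθ ≥ σ². Then for every x > 0 and every e ∈ ℝ, (κ/2) · ( ((max(e, θ)) − σ²/(4κ)) · x⁻¹ − x ) · 2(x − x⁻³) + (σ²/8) · (2 + 6 x⁻⁴) ≤ κ|e| + κθ + κ x⁻². -/
/-- Pointwise Lyapunov bound for the transformed-CIR McKean–Vlasov example: for constants
`κ, θ > 0` and `σ` with `κθ ≥ σ²`, for all `x > 0` and all `e ∈ ℝ`,
`(κ/2)((max(e,θ) − σ²/(4κ)) x⁻¹ − x) · 2(x − x⁻³) + (σ²/8)(2 + 6 x⁻⁴)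
  ≤ κ|e| + κθ + κ x⁻²`. -/
theorem transformed_CIR_lyapunov_bound
    (κ θ σ : ℝ) (hκ : 0 < κ) (hθ : 0 < θ) (hκθ : σ ^ 2 ≤ κ * θ) :
    ∀ x : ℝ, 0 < x → ∀ e : ℝ,
      κ / 2 * ((max e θ - σ ^ 2 / (4 * κ)) * x⁻¹ - x) * (2 * (x - (x⁻¹) ^ 3))
          + σ ^ 2 / 8 * (2 + 6 * (x⁻¹) ^ 4)
        ≤ κ * |e| + κ * θ + κ * (x⁻¹) ^ 2 := by
  intro x hx e
  have hx' : x ≠ 0 := hx.ne'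
  set m := max e θ with hm
  have hm1 : m ≤ |e| + θ :=
    max_le ((le_abs_self e).trans (by linarith [abs_nonneg e])) (by linarith [abs_nonneg e])
  have hm2 : θ ≤ m := le_max_right _ _
  have key : κ / 2 * ((m - σ ^ 2 / (4 * κ)) * x⁻¹ - x) * (2 * (x - (x⁻¹) ^ 3))
      + σ ^ 2 / 8 * (2 + 6 * (x⁻¹) ^ 4) =
      κ * m - κ * m * (x⁻¹) ^ 4 + σ ^ 2 * (x⁻¹) ^ 4 - κ * x ^ 2 + κ * (x⁻¹) ^ 2 := by
    field_simp
    ring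
  rw [key]
  have hy4 : 0 < (x⁻¹) ^ 4 := by positivity
  have hσm : σ ^ 2 ≤ κ * m := hκθ.trans (by nlinarith)
  nlinarith [mul_pos hκ (pow_pos hx 2), mul_nonneg (sub_nonneg.2 hσm) hy4.le]
end

section
/- Let μ and ν be Borel probability measures on ℝ^d and let π be a coupling of μ and ν, i.e. a Borel probability measure on ℝ^d × ℝ^d whose first marginal is μ and whose second marginal is ν. Let v : ℝ^d → [0, ∞) be Borel measurable with ∫ v dμ < ∞ and ∫ v dν < ∞, let κ ≥ 0, and let b̄ : ℝ^d → ℝ^d be Borel measurable, integrable with respect to both μ and ν, satisfying ‖b̄(x) − b̄(y)‖ ≤ κ (1 + √(v(x)) + √(v(y))) ‖x − y‖ for all x, y ∈ ℝ^d. Then ‖ ∫_{ℝ^d} b̄ dμ − ∫_{ℝ^d} b̄ dν ‖² ≤ 4 κ² ( 1 + ∫_{ℝ^d} v dμ + ∫_{ℝ^d} v dν ) · ∫_{ℝ^d × ℝ^d} ‖x − y‖² π(dx, dy). -/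
open MeasureTheory
open scoped ENNReal

/-!
By the marginal property, `∫ b̄ dμ - ∫ b̄ dν = ∫ (b̄ x - b̄ y) dπ`. The Lipschitz bound dominates
the integrand by `w(x, y) ‖x - y‖` with `w = |κ| (1 + √v(x) + √v(y))`, so Cauchy–Schwarz bounds the
square of its norm by `∫ w² dπ · ∫ ‖x - y‖² dπ`, and `w² ≤ 4κ² (1 + v(x) + v(y))` integrates, again
by the marginal property, to `4κ² (1 + ∫ v dμ + ∫ v dν)`. Cauchy–Schwarz is applied to lower
Lebesgue integrals, so that `∫ ‖x - y‖² dπ = ∞` needs no separate treatment.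
-/

theorem ENNReal.lintegral_mul_sq_le {α : Type*} [MeasurableSpace α] (μ : Measure α)
    {f g : α → ℝ≥0∞} (hf : AEMeasurable f μ) (hg : AEMeasurable g μ) :
    (∫⁻ a, f a * g a ∂μ) ^ 2 ≤ (∫⁻ a, f a ^ 2 ∂μ) * ∫⁻ a, g a ^ 2 ∂μ := by
  have h := ENNReal.lintegral_mul_le_Lp_mul_Lq μ Real.HolderConjugate.two_two hf hg
  simp only [ENNReal.rpow_two, Pi.mul_apply] at h
  calc (∫⁻ a, f a * g a ∂μ) ^ 2
      ≤ ((∫⁻ a, f a ^ 2 ∂μ) ^ (1 / 2 : ℝ) * (∫⁻ a, g a ^ 2 ∂μ) ^ (1 / 2 : ℝ)) ^ 2 := by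
        gcongr
    _ = (∫⁻ a, f a ^ 2 ∂μ) * ∫⁻ a, g a ^ 2 ∂μ := by
      rw [mul_pow, ← ENNReal.rpow_natCast, ← ENNReal.rpow_natCast, ← ENNReal.rpow_mul,
        ← ENNReal.rpow_mul]
      norm_num

theorem one_add_add_sq_le (a b : ℝ) : (1 + a + b) ^ 2 ≤ 4 * (1 + a ^ 2 + b ^ 2) := by
  nlinarith [sq_nonneg (1 - a), sq_nonneg (1 - b), sq_nonneg (a - b)]

section Coupling

variable {α Ω E : Type*} [MeasurableSpace α] [MeasurableSpace Ω]
  [NormedAddCommGroup E] [NormedSpace ℝ E]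

theorem integral_map_fst_sub_integral_map_snd {π : Measure (α × α)} {f : α → E}
    (h₁ : Integrable f (π.map Prod.fst)) (h₂ : Integrable f (π.map Prod.snd)) :
    ∫ x, f x ∂(π.map Prod.fst) - ∫ x, f x ∂(π.map Prod.snd) = ∫ p, f p.1 - f p.2 ∂π := by
  rw [integral_map measurable_fst.aemeasurable h₁.aestronglyMeasurable,
    integral_map measurable_snd.aemeasurable h₂.aestronglyMeasurable]
  exact (integral_sub (h₁.comp_measurable measurable_fst) (h₂.comp_measurable measurable_snd)).symm

theorem ofReal_norm_integral_sq_le {π : Measure Ω} {F : Ω → E} {w g : Ω → ℝ}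
    (hw : AEMeasurable w π) (hg : AEMeasurable g π) (hw₀ : ∀ p, 0 ≤ w p) (hg₀ : ∀ p, 0 ≤ g p)
    (hF : ∀ p, ‖F p‖ ≤ w p * g p) :
    ENNReal.ofReal (‖∫ p, F p ∂π‖ ^ 2)
      ≤ (∫⁻ p, ENNReal.ofReal (w p ^ 2) ∂π) * ∫⁻ p, ENNReal.ofReal (g p ^ 2) ∂π := by
  have hF' : ∀ p, ‖F p‖ₑ ≤ ENNReal.ofReal (w p) * ENNReal.ofReal (g p) := fun p => by
    rw [← ENNReal.ofReal_mul (hw₀ p), ← ofReal_norm]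
    exact ENNReal.ofReal_le_ofReal (hF p)
  simp only [ENNReal.ofReal_pow (norm_nonneg _), ENNReal.ofReal_pow (hw₀ _),
    ENNReal.ofReal_pow (hg₀ _), ofReal_norm]
  calc ‖∫ p, F p ∂π‖ₑ ^ 2
      ≤ (∫⁻ p, ENNReal.ofReal (w p) * ENNReal.ofReal (g p) ∂π) ^ 2 := by
        gcongr
        exact (enorm_integral_le_lintegral_enorm F).trans (lintegral_mono hF')
    _ ≤ _ := ENNReal.lintegral_mul_sq_le π hw.ennreal_ofReal hg.ennreal_ofReal

theorem lintegral_ofReal_sq_weight_le {π : Measure (α × α)} [IsProbabilityMeasure π] {v : α → ℝ}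
    (hv₀ : ∀ x, 0 ≤ v x) (h₁ : Integrable v (π.map Prod.fst)) (h₂ : Integrable v (π.map Prod.snd))
    (κ : ℝ) :
    ∫⁻ p, ENNReal.ofReal ((|κ| * (1 + √(v p.1) + √(v p.2))) ^ 2) ∂π
      ≤ ENNReal.ofReal
          (4 * κ ^ 2 * (1 + ∫ x, v x ∂(π.map Prod.fst) + ∫ x, v x ∂(π.map Prod.snd))) := by
  have hv₁ : Integrable (fun p => v p.1) π := h₁.comp_measurable measurable_fst
  have hv₂ : Integrable (fun p => v p.2) π := h₂.comp_measurable measurable_snd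
  have hintegrable : Integrable (fun p => 4 * κ ^ 2 * (1 + v p.1 + v p.2)) π :=
    (((integrable_const 1).add hv₁).add hv₂).const_mul _
  have hpoint (p : α × α) :
      (|κ| * (1 + √(v p.1) + √(v p.2))) ^ 2 ≤ 4 * κ ^ 2 * (1 + v p.1 + v p.2) := by
    have h := one_add_add_sq_le √(v p.1) √(v p.2)
    rw [Real.sq_sqrt (hv₀ _), Real.sq_sqrt (hv₀ _)] at h
    rw [mul_pow, sq_abs, mul_comm 4, mul_assoc]
    gcongr
  calc ∫⁻ p, ENNReal.ofReal ((|κ| * (1 + √(v p.1) + √(v p.2))) ^ 2) ∂π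
      ≤ ∫⁻ p, ENNReal.ofReal (4 * κ ^ 2 * (1 + v p.1 + v p.2)) ∂π :=
        lintegral_mono fun p => ENNReal.ofReal_le_ofReal (hpoint p)
    _ = ENNReal.ofReal (∫ p, 4 * κ ^ 2 * (1 + v p.1 + v p.2) ∂π) :=
        (ofReal_integral_eq_lintegral_ofReal hintegrable
          (ae_of_all _ fun p => by have := hv₀ p.1; have := hv₀ p.2; positivity)).symm
    _ = _ := by
        rw [integral_const_mul, integral_add (by exact (integrable_const 1).add hv₁) hv₂,
          integral_add (integrable_const 1) hv₁, integral_map measurable_fst.aemeasurable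
          h₁.aestronglyMeasurable, integral_map measurable_snd.aemeasurable h₂.aestronglyMeasurable]
        simp

end Coupling

theorem coupling_estimate_scheutzow_general
    {d : ℕ}
    (μ ν : Measure (EuclideanSpace ℝ (Fin d)))
    [IsProbabilityMeasure μ] [IsProbabilityMeasure ν]
    (π : Measure (EuclideanSpace ℝ (Fin d) × EuclideanSpace ℝ (Fin d)))
    [IsProbabilityMeasure π]
    (hπ1 : π.map Prod.fst = μ) (hπ2 : π.map Prod.snd = ν)
    (v : EuclideanSpace ℝ (Fin d) → ℝ) (hv0 : ∀ x, 0 ≤ v x)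
    (hvμ : Integrable v μ) (hvν : Integrable v ν)
    (κ : ℝ)
    (bbar : EuclideanSpace ℝ (Fin d) → EuclideanSpace ℝ (Fin d))
    (hbμ : Integrable bbar μ) (hbν : Integrable bbar ν)
    (hlip : ∀ x y, ‖bbar x - bbar y‖ ≤ κ * (1 + Real.sqrt (v x) + Real.sqrt (v y)) * ‖x - y‖) :
    ENNReal.ofReal (‖(∫ x, bbar x ∂μ) - ∫ x, bbar x ∂ν‖ ^ 2)
      ≤ ENNReal.ofReal (4 * κ ^ 2 * (1 + (∫ x, v x ∂μ) + ∫ x, v x ∂ν)) *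
          ∫⁻ p, ENNReal.ofReal (‖p.1 - p.2‖ ^ 2) ∂π := by
  subst hπ1 hπ2
  have hw : AEMeasurable (fun p => |κ| * (1 + √(v p.1) + √(v p.2))) π :=
    ((aemeasurable_const.add (hvμ.aemeasurable.comp_measurable measurable_fst).sqrt).add
      (hvν.aemeasurable.comp_measurable measurable_snd).sqrt).const_mul _
  rw [integral_map_fst_sub_integral_map_snd hbμ hbν]
  calc _ ≤ (∫⁻ p, ENNReal.ofReal ((|κ| * (1 + √(v p.1) + √(v p.2))) ^ 2) ∂π) *
          ∫⁻ p, ENNReal.ofReal (‖p.1 - p.2‖ ^ 2) ∂π :=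
        ofReal_norm_integral_sq_le hw (measurable_fst.sub measurable_snd).norm.aemeasurable
          (fun _ => by positivity) (fun _ => norm_nonneg _)
          fun p => (hlip p.1 p.2).trans (by gcongr; exact le_abs_self κ)
    _ ≤ _ := by gcongr; exact lintegral_ofReal_sq_weight_le hv0 hvμ hvν κ

/-- Key coupling estimate for the Scheutzow-type uniqueness argument: if `π` is a coupling of
`μ` and `ν`, `v ≥ 0` is integrable with respect to both marginals and `b̄` satisfies the
weighted Lipschitz bound `‖b̄(x) − b̄(y)‖ ≤ κ(1 + √v(x) + √v(y))‖x − y‖`, then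
`‖∫ b̄ dμ − ∫ b̄ dν‖² ≤ 4κ²(1 + ∫ v dμ + ∫ v dν) ∫ ‖x − y‖² dπ`. -/
theorem coupling_estimate_scheutzow
    {d : ℕ}
    (μ ν : Measure (EuclideanSpace ℝ (Fin d)))
    [IsProbabilityMeasure μ] [IsProbabilityMeasure ν]
    (π : Measure (EuclideanSpace ℝ (Fin d) × EuclideanSpace ℝ (Fin d)))
    [IsProbabilityMeasure π]
    (hπ1 : π.map Prod.fst = μ) (hπ2 : π.map Prod.snd = ν)
    (v : EuclideanSpace ℝ (Fin d) → ℝ) (hvmeas : Measurable v) (hv0 : ∀ x, 0 ≤ v x)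
    (hvμ : Integrable v μ) (hvν : Integrable v ν)
    (κ : ℝ) (hκ : 0 ≤ κ)
    (bbar : EuclideanSpace ℝ (Fin d) → EuclideanSpace ℝ (Fin d)) (hbmeas : Measurable bbar)
    (hbμ : Integrable bbar μ) (hbν : Integrable bbar ν)
    (hlip : ∀ x y, ‖bbar x - bbar y‖ ≤ κ * (1 + Real.sqrt (v x) + Real.sqrt (v y)) * ‖x - y‖) :
    ENNReal.ofReal (‖(∫ x, bbar x ∂μ) - ∫ x, bbar x ∂ν‖ ^ 2)
      ≤ ENNReal.ofReal (4 * κ ^ 2 * (1 + (∫ x, v x ∂μ) + ∫ x, v x ∂ν)) *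
          ∫⁻ p, ENNReal.ofReal (‖p.1 - p.2‖ ^ 2) ∂π :=
  coupling_estimate_scheutzow_general μ ν π hπ1 hπ2 v hv0 hvμ hvν κ bbar hbμ hbν hlip
end
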